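/- arXiv:2105.05351 — 3 statements merged into one kernel-verified Lean document; each statement's English description precedes it below -/
import Mathlib

section
/- Upper-bound preservation of the 1D upwind scheme with degenerate mobility: suppose |φ_i^n| ≤ 1 for all i and φ^{n+1} satisfies the implicit upwind finite-volume scheme with discretized mobility M(x,y) = M₀(1+x)⁺(1−y)⁺ (M₀ > 0), Δt, Δx > 0, and no-flux boundary fluxes. Then φ_i^{n+1} ≤ 1 for all i = 1,…,N. -/
theorem upwind_scheme_upper_bound (N : ℕ) (hN : 1 ≤ N)
    (Δt Δx M₀ : ℝ) (hΔt : 0 < Δt) (hΔx : 0 < Δx) (hM₀ : 0 < M₀)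
    (φn φn1 u F : ℕ → ℝ)
    (hbound : ∀ i ∈ Finset.Icc 1 N, |φn i| ≤ 1)
    (hF : ∀ i ∈ Finset.Ico 1 N,
      F i = max (u i) 0 * (M₀ * max (1 + φn1 i) 0 * max (1 - φn1 (i + 1)) 0) +
            min (u i) 0 * (M₀ * max (1 + φn1 (i + 1)) 0 * max (1 - φn1 i) 0))
    (hF0 : F 0 = 0) (hFN : F N = 0)
    (hscheme : ∀ i ∈ Finset.Icc 1 N,
      φn1 i = φn i - Δt / Δx * (F i - F (i - 1))) :
    ∀ i ∈ Finset.Icc 1 N, φn1 i ≤ 1 := by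
  intro i hi
  by_contra h
  push_neg at h
  obtain ⟨hi1, hiN⟩ := Finset.mem_Icc.mp hi
  have hz : max (1 - φn1 i) 0 = 0 := max_eq_right (by linarith)
  have hFi : 0 ≤ F i := by
    rcases eq_or_lt_of_le hiN with h' | h'
    · rw [h', hFN]
    · rw [hF i (Finset.mem_Ico.mpr ⟨hi1, h'⟩), hz]
      have h1 : 0 ≤ max (u i) 0 * (M₀ * max (1 + φn1 i) 0 * max (1 - φn1 (i + 1)) 0) := by
        positivity
      linarith [h1]
  have hFim : F (i - 1) ≤ 0 := by
    rcases eq_or_lt_of_le hi1 with h' | h'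
    · rw [← h']; simpa using le_of_eq hF0
    · have hmem : i - 1 ∈ Finset.Ico 1 N := by
        refine Finset.mem_Ico.mpr ⟨?_, ?_⟩ <;> omega
      have hsucc : i - 1 + 1 = i := Nat.sub_add_cancel hi1
      rw [hF (i - 1) hmem, hsucc, hz]
      have h2 : min (u (i - 1)) 0 *
          (M₀ * max (1 + φn1 i) 0 * max (1 - φn1 (i - 1)) 0) ≤ 0 :=
        mul_nonpos_of_nonpos_of_nonneg (min_le_right _ _) (by positivity)
      linarith [h2]
  have hs := hscheme i hi
  have hb := abs_le.mp (hbound i hi)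
  have hpos : 0 ≤ Δt / Δx * (F i - F (i - 1)) :=
    mul_nonneg (le_of_lt (div_pos hΔt hΔx)) (by linarith)
  linarith [hb.2]
end

section
/- Lower-bound preservation of the 1D upwind scheme with degenerate mobility: under the same hypotheses as the upper-bound result (|φ_i^n| ≤ 1 for all i, implicit upwind fluxes with M(x,y) = M₀(1+x)⁺(1−y)⁺, no-flux boundaries), the update satisfies φ_i^{n+1} ≥ −1 for all i. -/
theorem upwind_scheme_lower_bound (N : ℕ) (hN : 1 ≤ N)
    (Δt Δx M₀ : ℝ) (hΔt : 0 < Δt) (hΔx : 0 < Δx) (hM₀ : 0 < M₀)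
    (φn φn1 u F : ℕ → ℝ)
    (hbound : ∀ i ∈ Finset.Icc 1 N, |φn i| ≤ 1)
    (hF : ∀ i ∈ Finset.Ico 1 N,
      F i = max (u i) 0 * (M₀ * max (1 + φn1 i) 0 * max (1 - φn1 (i + 1)) 0) +
            min (u i) 0 * (M₀ * max (1 + φn1 (i + 1)) 0 * max (1 - φn1 i) 0))
    (hF0 : F 0 = 0) (hFN : F N = 0)
    (hscheme : ∀ i ∈ Finset.Icc 1 N,
      φn1 i = φn i - Δt / Δx * (F i - F (i - 1))) :
    ∀ i ∈ Finset.Icc 1 N, -1 ≤ φn1 i := by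
  intro i hi
  by_contra hcon
  push_neg at hcon
  rw [Finset.mem_Icc] at hi
  obtain ⟨h1, h2⟩ := hi
  have hmax : max (1 + φn1 i) 0 = 0 := by
    rw [max_eq_right]; linarith
  have hFi : F i ≤ 0 := by
    rcases eq_or_lt_of_le h2 with heq | hlt
    · rw [heq, hFN]
    · have hf := hF i (Finset.mem_Ico.mpr ⟨h1, hlt⟩)
      rw [hf, hmax]
      have hmin : min (u i) 0 ≤ 0 := min_le_right _ _
      have hn : 0 ≤ M₀ * max (1 + φn1 (i + 1)) 0 * max (1 - φn1 i) 0 := by positivity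
      have := mul_nonpos_of_nonpos_of_nonneg hmin hn
      simp only [mul_zero, zero_mul]
      linarith
  have hFim : 0 ≤ F (i - 1) := by
    rcases eq_or_lt_of_le h1 with heq | hlt
    · have : i - 1 = 0 := by omega
      rw [this, hF0]
    · have hmem : i - 1 ∈ Finset.Ico 1 N := Finset.mem_Ico.mpr ⟨by omega, by omega⟩
      have hf := hF (i - 1) hmem
      have hsucc : i - 1 + 1 = i := by omega
      rw [hsucc] at hf
      rw [hf, hmax]
      have h0 : 0 ≤ max (u (i-1)) 0 * (M₀ * max (1 + φn1 (i-1)) 0 * max (1 - φn1 i) 0) := by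
        positivity
      simp only [mul_zero, zero_mul]
      linarith
  have hs := hscheme i (Finset.mem_Icc.mpr ⟨h1, h2⟩)
  have hb := hbound i (Finset.mem_Icc.mpr ⟨h1, h2⟩)
  rw [abs_le] at hb
  have hpos : 0 < Δt / Δx := by positivity
  nlinarith [hb.1, hcon, hs, mul_nonpos_of_nonneg_of_nonpos (le_of_lt hpos) (by linarith : F i - F (i-1) ≤ 0)]
end

section
/- Discrete free-energy dissipation of the 1D semi-implicit scheme: suppose φ^{n+1} solves the scheme φ_i^{n+1} = φ_i^n − (Δt/Δx)(F_{i+1/2} − F_{i−1/2}) with upwind fluxes F_{i+1/2} = u⁺_{i+1/2} M(φ_i^{n+1},φ_{i+1}^{n+1}) + u⁻_{i+1/2} M(φ_{i+1}^{n+1},φ_i^{n+1}), velocities u_{i+1/2} = −(ξ_{i+1} − ξ_i)/Δx, semi-implicit chemical potential ξ_i = H_c'(φ_i^{n+1}) − H_e'(φ_i^n) − (ε²/2)[L_i(φ^n) + L_i(φ^{n+1})] (no wetting terms), no-flux boundary fluxes, convex differentiable H_c, H_e, and nonnegative mobility function M. Then the discrete free energy F_Δ^n = Δx Σ_i [H_c(φ_i^n)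 − H_e(φ_i^n)] + Δx Σ_{i=1}^{N−1} (ε²/2)((φ_{i+1}^n − φ_i^n)/Δx)² satisfies F_Δ^{n+1} − F_Δ^n ≤ −Δt Δx Σ_{i=1}^{N−1} min(M(φ_i^{n+1},φ_{i+1}^{n+1}), M(φ_{i+1}^{n+1},φ_i^{n+1})) |u_{i+1/2}|² ≤ 0. -/
/-!
Test the scheme against the chemical potential `ξ`, with `δφ = φⁿ⁺¹ − φⁿ`. Convex splitting
bounds the bulk part of the energy change by `Σ (H_c'(φⁿ⁺¹) − H_e'(φⁿ)) δφ`, and because the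
Laplacian is averaged over the two time levels, the gradient part changes by exactly
`−Σ (ε²/2)(L φⁿ + L φⁿ⁺¹) δφ`: both Neumann Laplacians are discrete divergences of gradients
vanishing at the boundary. Hence the energy change is at most `Δx Σ ξ δφ`. Inserting the scheme
and summing by parts (the boundary fluxes vanish) turns this into `−Δt Δx Σ u F`, and the upwind
choice of mobility gives `u F ≥ min(M, M') u²` termwise.
-/

open Finset

theorem sum_Icc_mul_sub_add_sum_Ico_sub_mul {R : Type*} [CommRing R] (f g : ℕ → R) {N : ℕ}
    (hN : 1 ≤ N) :
    ∑ i ∈ Icc 1 N, f i * (g i - g (i - 1)) + ∑ i ∈ Ico 1 N, (f (i + 1) - f i) * g i =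
      f N * g N - f 1 * g 0 := by
  induction N, hN using Nat.le_induction with
  | base =>
    simp only [Icc_self, sum_singleton, Ico_self, sum_empty, add_zero, Nat.sub_self]
    ring
  | succ n hn ih =>
    rw [sum_Icc_succ_top (by omega), sum_Ico_succ_top hn, Nat.add_sub_cancel]
    linear_combination ih

theorem sum_Icc_mul_sub_eq_neg_sum_Ico_sub_mul {R : Type*} [CommRing R] (f g : ℕ → R) {N : ℕ}
    (hg0 : g 0 = 0) (hgN : g N = 0) :
    ∑ i ∈ Icc 1 N, f i * (g i - g (i - 1)) = -∑ i ∈ Ico 1 N, (f (i + 1) - f i) * g i := by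
  rcases Nat.eq_zero_or_pos N with rfl | hN
  · simp
  · have h := sum_Icc_mul_sub_add_sum_Ico_sub_mul f g hN
    rw [hg0, hgN] at h
    linear_combination h

theorem ConvexOn.sub_le_mul_sub_of_hasDerivAt {S : Set ℝ} {f : ℝ → ℝ} {f' x y : ℝ}
    (hf : ConvexOn ℝ S f) (hx : x ∈ S) (hy : y ∈ S) (hderiv : HasDerivAt f f' x) :
    f x - f y ≤ f' * (x - y) := by
  rcases lt_trichotomy x y with hxy | rfl | hxy
  · have h := hf.le_slope_of_hasDerivAt hx hy hxy hderiv
    rw [slope_def_field, le_div_iff₀ (sub_pos.2 hxy)] at h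
    linarith
  · simp
  · have h := hf.slope_le_of_hasDerivAt hy hx hxy hderiv
    rw [slope_def_field, div_le_iff₀ (sub_pos.2 hxy)] at h
    linarith

theorem ConvexOn.sub_sub_sub_le_of_hasDerivAt {S : Set ℝ} {f g : ℝ → ℝ} {f' g' x y : ℝ}
    (hf : ConvexOn ℝ S f) (hg : ConvexOn ℝ S g) (hx : x ∈ S) (hy : y ∈ S)
    (hf' : HasDerivAt f f' x) (hg' : HasDerivAt g g' y) :
    (f x - g x) - (f y - g y) ≤ (f' - g') * (x - y) := by
  have hfxy := hf.sub_le_mul_sub_of_hasDerivAt hx hy hf'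
  have hgyx := hg.sub_le_mul_sub_of_hasDerivAt hy hx hg'
  linarith

theorem min_mul_sq_le_mul_upwind (u a b : ℝ) :
    min a b * u ^ 2 ≤ u * (max u 0 * a + min u 0 * b) := by
  rcases le_total u 0 with hu | hu
  · calc min a b * u ^ 2 ≤ b * u ^ 2 := mul_le_mul_of_nonneg_right (min_le_right a b) (sq_nonneg u)
      _ = u * (max u 0 * a + min u 0 * b) := by rw [max_eq_right hu, min_eq_left hu]; ring
  · calc min a b * u ^ 2 ≤ a * u ^ 2 := mul_le_mul_of_nonneg_right (min_le_left a b) (sq_nonneg u)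
      _ = u * (max u 0 * a + min u 0 * b) := by rw [max_eq_left hu, min_eq_right hu]; ring

def IsNeumannLaplacian (N : ℕ) (Δx : ℝ) (χ Lχ : ℕ → ℝ) : Prop :=
  Lχ 1 = (χ 2 - χ 1) / Δx ^ 2 ∧ Lχ N = (χ (N - 1) - χ N) / Δx ^ 2 ∧
    ∀ i, 2 ≤ i → i ≤ N - 1 → Lχ i = (χ (i + 1) - 2 * χ i + χ (i - 1)) / Δx ^ 2

/-- Index `i` stands for the cell face `i + 1/2`; the boundary faces `1/2` and `N + 1/2` carry
no flux. -/
noncomputable def noFluxGrad (N : ℕ) (Δx : ℝ) (χ : ℕ → ℝ) (i : ℕ) : ℝ :=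
  if 1 ≤ i ∧ i < N then (χ (i + 1) - χ i) / Δx else 0

section NeumannLaplacian

variable {N : ℕ} {Δx : ℝ} {χ Lχ : ℕ → ℝ}

theorem noFluxGrad_of_mem_Ico {i : ℕ} (hi : i ∈ Ico 1 N) :
    noFluxGrad N Δx χ i = (χ (i + 1) - χ i) / Δx :=
  if_pos (mem_Ico.1 hi)

theorem noFluxGrad_zero : noFluxGrad N Δx χ 0 = 0 := if_neg (by omega)

theorem noFluxGrad_self : noFluxGrad N Δx χ N = 0 := if_neg (by omega)

theorem IsNeumannLaplacian.eq_noFluxGrad_sub (hL : IsNeumannLaplacian N Δx χ Lχ) (hN : 2 ≤ N)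
    {i : ℕ} (hi : i ∈ Icc 1 N) :
    Lχ i = (noFluxGrad N Δx χ i - noFluxGrad N Δx χ (i - 1)) / Δx := by
  obtain ⟨hL1, hLN, hLi⟩ := hL
  obtain ⟨hi1, hiN⟩ := mem_Icc.1 hi
  rcases (show i = 1 ∨ i = N ∨ (2 ≤ i ∧ i ≤ N - 1) by omega) with rfl | rfl | ⟨hi2, hiN'⟩
  · rw [hL1, noFluxGrad_of_mem_Ico (mem_Ico.2 ⟨le_rfl, by omega⟩), Nat.sub_self,
      noFluxGrad_zero]
    ring
  · have hpred : i - 1 + 1 = i := by omega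
    rw [hLN, noFluxGrad_self, noFluxGrad_of_mem_Ico (mem_Ico.2 ⟨by omega, by omega⟩), hpred]
    ring
  · have hpred : i - 1 + 1 = i := by omega
    rw [hLi i hi2 hiN', noFluxGrad_of_mem_Ico (mem_Ico.2 ⟨by omega, by omega⟩),
      noFluxGrad_of_mem_Ico (mem_Ico.2 ⟨by omega, by omega⟩), hpred]
    ring

theorem IsNeumannLaplacian.sum_mul_eq_neg_sum_grad_mul_grad
    (hL : IsNeumannLaplacian N Δx χ Lχ) (hN : 2 ≤ N) (ψ : ℕ → ℝ) :
    ∑ i ∈ Icc 1 N, ψ i * Lχ i =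
      -∑ i ∈ Ico 1 N, (ψ (i + 1) - ψ i) / Δx * ((χ (i + 1) - χ i) / Δx) := by
  calc ∑ i ∈ Icc 1 N, ψ i * Lχ i
      = ∑ i ∈ Icc 1 N, ψ i / Δx * (noFluxGrad N Δx χ i - noFluxGrad N Δx χ (i - 1)) :=
        sum_congr rfl fun i hi ↦ by rw [hL.eq_noFluxGrad_sub hN hi]; ring
    _ = -∑ i ∈ Ico 1 N, (ψ (i + 1) / Δx - ψ i / Δx) * noFluxGrad N Δx χ i :=
        sum_Icc_mul_sub_eq_neg_sum_Ico_sub_mul _ _ noFluxGrad_zero noFluxGrad_self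
    _ = -∑ i ∈ Ico 1 N, (ψ (i + 1) - ψ i) / Δx * ((χ (i + 1) - χ i) / Δx) := by
        congr 1
        exact sum_congr rfl fun i hi ↦ by rw [noFluxGrad_of_mem_Ico hi]; ring

theorem IsNeumannLaplacian.sum_sq_sub_sum_sq {φ Lφ φ' Lφ' : ℕ → ℝ}
    (hL : IsNeumannLaplacian N Δx φ Lφ) (hL' : IsNeumannLaplacian N Δx φ' Lφ') (hN : 2 ≤ N)
    (κ : ℝ) :
    ∑ i ∈ Ico 1 N, κ * ((φ' (i + 1) - φ' i) / Δx) ^ 2 -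
        ∑ i ∈ Ico 1 N, κ * ((φ (i + 1) - φ i) / Δx) ^ 2 =
      -∑ i ∈ Icc 1 N, (φ' i - φ i) * (κ * (Lφ i + Lφ' i)) := by
  have h := hL.sum_mul_eq_neg_sum_grad_mul_grad hN (fun i ↦ φ' i - φ i)
  have h' := hL'.sum_mul_eq_neg_sum_grad_mul_grad hN (fun i ↦ φ' i - φ i)
  calc ∑ i ∈ Ico 1 N, κ * ((φ' (i + 1) - φ' i) / Δx) ^ 2 -
        ∑ i ∈ Ico 1 N, κ * ((φ (i + 1) - φ i) / Δx) ^ 2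
      = κ * (-∑ i ∈ Icc 1 N, (φ' i - φ i) * Lφ i - ∑ i ∈ Icc 1 N, (φ' i - φ i) * Lφ' i) := by
        rw [h, h', neg_neg, sub_neg_eq_add, ← sum_sub_distrib, ← sum_add_distrib, mul_sum]
        exact sum_congr rfl fun i _ ↦ by ring
    _ = -∑ i ∈ Icc 1 N, (φ' i - φ i) * (κ * (Lφ i + Lφ' i)) := by
        rw [sub_eq_add_neg, ← neg_add, ← sum_add_distrib, mul_neg, mul_sum]
        exact congrArg _ (sum_congr rfl fun i _ ↦ by ring)

end NeumannLaplacian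

theorem sum_mul_sub_eq_of_conservative_scheme {N : ℕ} {Δt Δx : ℝ} (hΔx : Δx ≠ 0)
    {φ φ' ξ u F : ℕ → ℝ} (hF0 : F 0 = 0) (hFN : F N = 0)
    (hscheme : ∀ i ∈ Icc 1 N, φ' i = φ i - Δt / Δx * (F i - F (i - 1)))
    (hu : ∀ i ∈ Ico 1 N, u i = -(ξ (i + 1) - ξ i) / Δx) :
    Δx * ∑ i ∈ Icc 1 N, ξ i * (φ' i - φ i) = -(Δt * Δx) * ∑ i ∈ Ico 1 N, u i * F i := by
  calc Δx * ∑ i ∈ Icc 1 N, ξ i * (φ' i - φ i)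
      = -Δt * ∑ i ∈ Icc 1 N, ξ i * (F i - F (i - 1)) := by
        rw [mul_sum, mul_sum]
        refine sum_congr rfl fun i hi ↦ ?_
        rw [hscheme i hi]
        field_simp
        ring
    _ = Δt * ∑ i ∈ Ico 1 N, (ξ (i + 1) - ξ i) * F i := by
        rw [sum_Icc_mul_sub_eq_neg_sum_Ico_sub_mul _ _ hF0 hFN]
        ring
    _ = -(Δt * Δx) * ∑ i ∈ Ico 1 N, u i * F i := by
        rw [mul_sum, mul_sum]
        refine sum_congr rfl fun i hi ↦ ?_
        rw [hu i hi]
        field_simp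

theorem discrete_free_energy_dissipation_1D_general (N : ℕ) (hN : 2 ≤ N)
    (Δt Δx ε : ℝ) (hΔt : 0 < Δt) (hΔx : 0 < Δx)
    (φn φn1 ξ u F : ℕ → ℝ)
    (Hc He : ℝ → ℝ) (Hc' He' : ℝ → ℝ)
    (hHcconv : ConvexOn ℝ Set.univ Hc) (hHeconv : ConvexOn ℝ Set.univ He)
    (hHc' : ∀ x, HasDerivAt Hc (Hc' x) x) (hHe' : ∀ x, HasDerivAt He (He' x) x)
    (M : ℝ → ℝ → ℝ) (hM : ∀ x y, 0 ≤ M x y)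
    (L : (ℕ → ℝ) → ℕ → ℝ)
    (hL1 : ∀ χ : ℕ → ℝ, L χ 1 = (χ 2 - χ 1) / Δx ^ 2)
    (hLN : ∀ χ : ℕ → ℝ, L χ N = (χ (N - 1) - χ N) / Δx ^ 2)
    (hLi : ∀ χ : ℕ → ℝ, ∀ i, 2 ≤ i → i ≤ N - 1 →
      L χ i = (χ (i + 1) - 2 * χ i + χ (i - 1)) / Δx ^ 2)
    (hξ : ∀ i ∈ Finset.Icc 1 N,
      ξ i = Hc' (φn1 i) - He' (φn i) - ε ^ 2 / 2 * (L φn i + L φn1 i))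
    (hu : ∀ i ∈ Finset.Ico 1 N, u i = -(ξ (i + 1) - ξ i) / Δx)
    (hF : ∀ i ∈ Finset.Ico 1 N,
      F i = max (u i) 0 * M (φn1 i) (φn1 (i + 1)) +
            min (u i) 0 * M (φn1 (i + 1)) (φn1 i))
    (hF0 : F 0 = 0) (hFN : F N = 0)
    (hscheme : ∀ i ∈ Finset.Icc 1 N,
      φn1 i = φn i - Δt / Δx * (F i - F (i - 1))) :
    (Δx * ∑ i ∈ Finset.Icc 1 N, (Hc (φn1 i) - He (φn1 i)) +
        Δx * ∑ i ∈ Finset.Ico 1 N, ε ^ 2 / 2 * ((φn1 (i + 1) - φn1 i) / Δx) ^ 2) -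
      (Δx * ∑ i ∈ Finset.Icc 1 N, (Hc (φn i) - He (φn i)) +
        Δx * ∑ i ∈ Finset.Ico 1 N, ε ^ 2 / 2 * ((φn (i + 1) - φn i) / Δx) ^ 2) ≤
      -(Δt * Δx) * ∑ i ∈ Finset.Ico 1 N,
        min (M (φn1 i) (φn1 (i + 1))) (M (φn1 (i + 1)) (φn1 i)) * (u i) ^ 2 ∧
    -(Δt * Δx) * ∑ i ∈ Finset.Ico 1 N,
        min (M (φn1 i) (φn1 (i + 1))) (M (φn1 (i + 1)) (φn1 i)) * (u i) ^ 2 ≤ 0 := by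
  have hgrad := IsNeumannLaplacian.sum_sq_sub_sum_sq ⟨hL1 φn, hLN φn, hLi φn⟩
    ⟨hL1 φn1, hLN φn1, hLi φn1⟩ hN (ε ^ 2 / 2)
  have hbulk : ∑ i ∈ Icc 1 N, (Hc (φn1 i) - He (φn1 i)) -
      ∑ i ∈ Icc 1 N, (Hc (φn i) - He (φn i)) ≤
      ∑ i ∈ Icc 1 N, (Hc' (φn1 i) - He' (φn i)) * (φn1 i - φn i) := by
    rw [← sum_sub_distrib]
    exact sum_le_sum fun i _ ↦
      hHcconv.sub_sub_sub_le_of_hasDerivAt hHeconv trivial trivial (hHc' _) (hHe' _)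
  have hchem : ∑ i ∈ Icc 1 N, (Hc' (φn1 i) - He' (φn i)) * (φn1 i - φn i) -
      ∑ i ∈ Icc 1 N, (φn1 i - φn i) * (ε ^ 2 / 2 * (L φn i + L φn1 i)) =
      ∑ i ∈ Icc 1 N, ξ i * (φn1 i - φn i) := by
    rw [← sum_sub_distrib]
    exact sum_congr rfl fun i hi ↦ by rw [hξ i hi]; ring
  have hdiss := sum_mul_sub_eq_of_conservative_scheme hΔx.ne' hF0 hFN hscheme hu
  have hupwind : ∑ i ∈ Ico 1 N, min (M (φn1 i) (φn1 (i + 1))) (M (φn1 (i + 1)) (φn1 i)) * u i ^ 2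
      ≤ ∑ i ∈ Ico 1 N, u i * F i :=
    sum_le_sum fun i hi ↦ hF i hi ▸ min_mul_sq_le_mul_upwind _ _ _
  have hrate : 0 ≤ ∑ i ∈ Ico 1 N,
      min (M (φn1 i) (φn1 (i + 1))) (M (φn1 (i + 1)) (φn1 i)) * u i ^ 2 :=
    sum_nonneg fun i _ ↦ mul_nonneg (le_min (hM _ _) (hM _ _)) (sq_nonneg _)
  have hΔ : 0 ≤ Δt * Δx := (mul_pos hΔt hΔx).le
  constructor
  · linear_combination mul_le_mul_of_nonneg_left hbulk hΔx.le + Δx * hgrad + Δx * hchem + hdiss +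
      mul_le_mul_of_nonneg_left hupwind hΔ
  · exact mul_nonpos_of_nonpos_of_nonneg (neg_nonpos.2 hΔ) hrate

theorem discrete_free_energy_dissipation_1D (N : ℕ) (hN : 2 ≤ N)
    (Δt Δx ε : ℝ) (hΔt : 0 < Δt) (hΔx : 0 < Δx) (hε : 0 < ε)
    (φn φn1 ξ u F : ℕ → ℝ)
    (Hc He : ℝ → ℝ) (Hc' He' : ℝ → ℝ)
    (hHcconv : ConvexOn ℝ Set.univ Hc) (hHeconv : ConvexOn ℝ Set.univ He)
    (hHc' : ∀ x, HasDerivAt Hc (Hc' x) x) (hHe' : ∀ x, HasDerivAt He (He' x) x)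
    (M : ℝ → ℝ → ℝ) (hM : ∀ x y, 0 ≤ M x y)
    (L : (ℕ → ℝ) → ℕ → ℝ)
    (hL1 : ∀ χ : ℕ → ℝ, L χ 1 = (χ 2 - χ 1) / Δx ^ 2)
    (hLN : ∀ χ : ℕ → ℝ, L χ N = (χ (N - 1) - χ N) / Δx ^ 2)
    (hLi : ∀ χ : ℕ → ℝ, ∀ i, 2 ≤ i → i ≤ N - 1 →
      L χ i = (χ (i + 1) - 2 * χ i + χ (i - 1)) / Δx ^ 2)
    (hξ : ∀ i ∈ Finset.Icc 1 N,
      ξ i = Hc' (φn1 i) - He' (φn i) - ε ^ 2 / 2 * (L φn i + L φn1 i))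
    (hu : ∀ i ∈ Finset.Ico 1 N, u i = -(ξ (i + 1) - ξ i) / Δx)
    (hF : ∀ i ∈ Finset.Ico 1 N,
      F i = max (u i) 0 * M (φn1 i) (φn1 (i + 1)) +
            min (u i) 0 * M (φn1 (i + 1)) (φn1 i))
    (hF0 : F 0 = 0) (hFN : F N = 0)
    (hscheme : ∀ i ∈ Finset.Icc 1 N,
      φn1 i = φn i - Δt / Δx * (F i - F (i - 1))) :
    (Δx * ∑ i ∈ Finset.Icc 1 N, (Hc (φn1 i) - He (φn1 i)) +
        Δx * ∑ i ∈ Finset.Ico 1 N, ε ^ 2 / 2 * ((φn1 (i + 1) - φn1 i) / Δx) ^ 2) -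
      (Δx * ∑ i ∈ Finset.Icc 1 N, (Hc (φn i) - He (φn i)) +
        Δx * ∑ i ∈ Finset.Ico 1 N, ε ^ 2 / 2 * ((φn (i + 1) - φn i) / Δx) ^ 2) ≤
      -(Δt * Δx) * ∑ i ∈ Finset.Ico 1 N,
        min (M (φn1 i) (φn1 (i + 1))) (M (φn1 (i + 1)) (φn1 i)) * (u i) ^ 2 ∧
    -(Δt * Δx) * ∑ i ∈ Finset.Ico 1 N,
        min (M (φn1 i) (φn1 (i + 1))) (M (φn1 (i + 1)) (φn1 i)) * (u i) ^ 2 ≤ 0 :=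
  discrete_free_energy_dissipation_1D_general N hN Δt Δx ε hΔt hΔx φn φn1 ξ u F Hc He Hc' He'
    hHcconv hHeconv hHc' hHe' M hM L hL1 hLN hLi hξ hu hF hF0 hFN hscheme
end
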